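/- In a DAG G, two distinct vertices p and q are adjacent if and only if they are d-connected given every subset S ⊆ V \ {p, q}; equivalently, p and q are nonadjacent iff they are d-separated by Pa(p) \ {q} or by Pa(q) \ {p} (the parents of p excluding q, or the parents of q excluding p). -/

import Mathlib

/-- The predicate on a walk (list of vertices) that every interior vertex is "active"
given the conditioning set `S`: colliders must have a descendant in `S`, and
non-colliders must lie outside `S`. -/
def ActiveList {V : Type*} (E : V → V → Prop) (S : Set V) : List V → Prop
  | a :: b :: c :: l =>
      ((E a b ∧ E c b) → ∃ d, Relation.ReflTransGen E b d ∧ d ∈ S) ∧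
      (¬(E a b ∧ E c b) → b ∉ S) ∧
      ActiveList E S (b :: c :: l)
  | _ => True

/-- `p` and `q` are d-connected given `S` in the directed graph `E`: there is a
path (repetition-free undirected walk) from `p` to `q` all of whose interior
vertices are active given `S`. -/
def DConnected {V : Type*} (E : V → V → Prop) (S : Set V) (p q : V) : Prop :=
  ∃ l : List V, l.Nodup ∧ l.Chain' (fun a b => E a b ∨ E b a) ∧
    l.head? = some p ∧ l.getLast? = some q ∧ ActiveList E S l

/-!
If `p` and `q` are adjacent, the two-vertex path `p — q` has no interior vertex and is active
given every `S`. Conversely, suppose they are nonadjacent; by acyclicity one of them, say `q`,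
is not a descendant of `p`. Any path from `p` to `q` either leaves `p` along an edge `p → u`,
and then (since `Pa(p) \ {q}` contains no descendant of `p`, no collider on it can be
activated) stays directed and ends at a descendant of `p`, impossible; or it enters `p` along
`u → p`, and then `u ≠ q` is a non-collider lying in `Pa(p) \ {q}`, which blocks the path.
-/

section DSeparation

variable {V : Type*} (E : V → V → Prop) (S : Set V)

def ActiveTriple (a b c : V) : Prop :=
  ((E a b ∧ E c b) → ∃ d, Relation.ReflTransGen E b d ∧ d ∈ S) ∧
  (¬(E a b ∧ E c b) → b ∉ S)

variable {E S}

theorem ActiveTriple.symm {a b c : V} (h : ActiveTriple E S a b c) :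
    ActiveTriple E S c b a :=
  ⟨fun hcol => h.1 hcol.symm, fun hcol => h.2 (fun hcol' => hcol hcol'.symm)⟩

theorem activeList_cons_cons_cons {a b c : V} {l : List V} :
    ActiveList E S (a :: b :: c :: l) ↔
      ActiveTriple E S a b c ∧ ActiveList E S (b :: c :: l) := by
  simp only [ActiveList, ActiveTriple, and_assoc]

theorem activeList_iff_forall_infix :
    ∀ l : List V, ActiveList E S l ↔ ∀ a b c, [a, b, c] <:+: l → ActiveTriple E S a b c
  | a :: b :: c :: l => by
      rw [activeList_cons_cons_cons, activeList_iff_forall_infix (b :: c :: l)]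
      simp only [List.infix_cons_iff (a := a), List.cons_prefix_cons, List.nil_prefix,
        and_true, or_imp, forall_and]
      constructor
      · rintro ⟨habc, hrest⟩
        exact ⟨by rintro _ _ _ ⟨rfl, rfl, rfl⟩; exact habc, hrest⟩
      · rintro ⟨habc, hrest⟩
        exact ⟨habc a b c ⟨rfl, rfl, rfl⟩, hrest⟩
  | [] | [_] | [_, _] => iff_of_true trivial fun _ _ _ h => absurd h.length_le (by simp)

theorem ActiveList.reverse {l : List V} (h : ActiveList E S l) : ActiveList E S l.reverse := by
  rw [activeList_iff_forall_infix] at h ⊢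
  intro a b c habc
  exact (h c b a (by simpa using List.reverse_infix.mpr habc)).symm

theorem DConnected.symm {p q : V} (h : DConnected E S p q) : DConnected E S q p := by
  obtain ⟨l, hnodup, hchain, hhead, hlast, hactive⟩ := h
  refine ⟨l.reverse, List.nodup_reverse.2 hnodup, ?_, ?_, ?_, hactive.reverse⟩
  · exact List.isChain_reverse.mpr (hchain.imp fun _ _ => Or.symm)
  · rwa [List.head?_reverse]
  · rwa [List.getLast?_reverse]

theorem dConnected_of_adj {p q : V} (hpq : p ≠ q) (hadj : E p q ∨ E q p) :
    DConnected E S p q :=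
  ⟨[p, q], by simp [hpq], List.isChain_pair.mpr hadj, rfl, rfl, trivial⟩

/-- A walk leaving a descendant `b` of `p` forward cannot turn back: a collider on it would
have a descendant in `S`, which would then be a descendant of `p`. -/
theorem ActiveList.reflTransGen_getLast {p q : V} (hS : ∀ d ∈ S, ¬ Relation.ReflTransGen E p d) :
    ∀ (l : List V) (a b : V), E a b → Relation.ReflTransGen E p b →
      (a :: b :: l).IsChain (fun x y => E x y ∨ E y x) → ActiveList E S (a :: b :: l) →
      (a :: b :: l).getLast? = some q → Relation.ReflTransGen E p q
  | [], _, _, _, hpb, _, _, hlast => by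
      simp only [List.getLast?_cons_cons, List.getLast?_singleton, Option.some.injEq] at hlast
      exact hlast ▸ hpb
  | c :: l, a, b, hab, hpb, hchain, hactive, hlast => by
      obtain ⟨hcollider, -, hactive'⟩ := hactive
      have hchain' := (List.isChain_cons_cons.mp hchain).2
      have hcb : ¬ E c b := fun hcb =>
        let ⟨d, hbd, hdS⟩ := hcollider ⟨hab, hcb⟩
        hS d hdS (hpb.trans hbd)
      have hbc : E b c := (List.isChain_cons_cons.mp hchain').1.resolve_right hcb
      exact ActiveList.reflTransGen_getLast hS l b c hbc (hpb.tail hbc) hchain' hactive'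
        (by rwa [List.getLast?_cons_cons] at hlast)

theorem not_dConnected_parents_of_not_reflTransGen
    (hacyclic : ∀ v, ¬ Relation.TransGen E v v) {p q : V} (hpq : p ≠ q)
    (hnadj : ¬(E p q ∨ E q p)) (hq : ¬ Relation.ReflTransGen E p q) :
    ¬ DConnected E ({v | E v p} \ {q}) p q := by
  rintro ⟨_ | ⟨x, _ | ⟨u, l⟩⟩, -, hchain, hhead, hlast, hactive⟩
  · simp at hhead
  · simp only [List.head?_cons, List.getLast?_singleton, Option.some.injEq] at hhead hlast
    exact hpq (hhead ▸ hlast)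
  obtain rfl : p = x := by simpa using hhead.symm
  by_cases hpu : E p u
  · exact hq <| ActiveList.reflTransGen_getLast
      (fun d hd hpd => hacyclic p (.tail' hpd hd.1)) l p u hpu (.single hpu) hchain hactive hlast
  have hup : E u p := (List.isChain_cons_cons.mp hchain).1.resolve_left hpu
  have huq : u ≠ q := fun h => hnadj (.inr (h ▸ hup))
  rcases l with _ | ⟨w, l⟩
  · exact huq (by simpa using hlast)
  · exact hactive.2.1 (fun hcol => hpu hcol.1) ⟨hup, huq⟩

theorem not_reflTransGen_or_not_reflTransGen (hacyclic : ∀ v, ¬ Relation.TransGen E v v)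
    {p q : V} (hpq : p ≠ q) :
    ¬ Relation.ReflTransGen E p q ∨ ¬ Relation.ReflTransGen E q p := by
  by_contra! ⟨hpq', hqp⟩
  exact hacyclic q ((Relation.reflTransGen_iff_eq_or_transGen.mp hpq').resolve_left hpq.symm
    |>.trans_right hqp)

theorem not_dConnected_parents_or_of_not_adj (hacyclic : ∀ v, ¬ Relation.TransGen E v v)
    {p q : V} (hpq : p ≠ q) (hnadj : ¬(E p q ∨ E q p)) :
    ¬ DConnected E ({v | E v p} \ {q}) p q ∨ ¬ DConnected E ({v | E v q} \ {p}) p q := by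
  rcases not_reflTransGen_or_not_reflTransGen hacyclic hpq with hpq' | hqp
  · exact .inl (not_dConnected_parents_of_not_reflTransGen hacyclic hpq hnadj hpq')
  · exact .inr fun h => not_dConnected_parents_of_not_reflTransGen hacyclic hpq.symm
      (fun hadj => hnadj hadj.symm) hqp h.symm

end DSeparation

theorem stmt_16_general {V : Type*}
    (E : V → V → Prop) (hacyclic : ∀ v, ¬ Relation.TransGen E v v)
    (p q : V) (hpq : p ≠ q) :
    ((E p q ∨ E q p) ↔ ∀ S : Set V, p ∉ S → q ∉ S → DConnected E S p q) ∧
    (¬(E p q ∨ E q p) ↔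
      (¬ DConnected E ({v | E v p} \ {q}) p q ∨
       ¬ DConnected E ({v | E v q} \ {p}) p q)) := by
  have hsep := not_dConnected_parents_or_of_not_adj hacyclic hpq
  refine ⟨⟨fun hadj S _ _ => dConnected_of_adj hpq hadj, fun hconn => ?_⟩,
    ⟨hsep, fun hsep' hadj => hsep'.elim (· (dConnected_of_adj hpq hadj))
      (· (dConnected_of_adj hpq hadj))⟩⟩
  by_contra hnadj
  rcases hsep hnadj with hp | hq
  · exact hp <| hconn _ (fun h => hacyclic p (.single h.1)) (fun h => h.2 rfl)
  · exact hq <| hconn _ (fun h => h.2 rfl) (fun h => hacyclic q (.single h.1))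

/-- In a finite DAG, two distinct vertices `p` and `q` are adjacent iff they are
d-connected given every subset `S ⊆ V \ {p,q}`; equivalently, `p` and `q` are
nonadjacent iff they are d-separated by `Pa(p) \ {q}` or by `Pa(q) \ {p}`. -/
theorem stmt_16 {V : Type*} [Fintype V] [DecidableEq V]
    (E : V → V → Prop) (hacyclic : ∀ v, ¬ Relation.TransGen E v v)
    (p q : V) (hpq : p ≠ q) :
    ((E p q ∨ E q p) ↔ ∀ S : Set V, p ∉ S → q ∉ S → DConnected E S p q) ∧
    (¬(E p q ∨ E q p) ↔
      (¬ DConnected E ({v | E v p} \ {q}) p q ∨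
       ¬ DConnected E ({v | E v q} \ {p}) p q)) :=
  stmt_16_general E hacyclic p q hpq
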